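/- For all natural numbers n ≥ 1 and t₁ ≥ t₂ ≥ 1, the poset Ramsey number of the chain composition C_{t₁,t₂} versus the Boolean lattice satisfies R(C_{t₁,t₂}, Q_n) = n + t₁ + 1. -/

import Mathlib

/-- The poset Ramsey number `R(P₁, P₂)`: the least `N` such that every blue/red coloring
(`true` = blue, `false` = red) of the Boolean lattice `Q_N` (all subsets of an `N`-element
set, ordered by inclusion) contains a blue (induced) copy of `P₁` or a red (induced) copy
of `P₂`. -/
noncomputable def posetRamsey (P₁ : Type*) (P₂ : Type*) [PartialOrder P₁] [PartialOrder P₂] : ℕ :=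
  sInf {N : ℕ | ∀ c : Finset (Fin N) → Bool,
    (∃ f : P₁ ↪o Finset (Fin N), ∀ x, c (f x) = true) ∨
    (∃ f : P₂ ↪o Finset (Fin N), ∀ x, c (f x) = false)}

/-!
Upper bound: colour `P × C_{m+1}` and, for `p : P`, let `h p ≤ m` be the largest `k` such that
some blue chain `z₀ < ⋯ < z_{k-1}` satisfies `zᵢ ≤ (p, i)`. Then `h` is monotone, and `(p, h p)`
is red, since otherwise it would extend such a chain; so `p ↦ (p, h p)` is a red copy of `P`
unless there is a blue `C_{m+1}`. As `Q_n × C_{m+1}` embeds in `Q_{n+m}`, and `Q_{n+m+2}` contains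
two mutually incomparable copies of `Q_{n+m}` (fix one of two new coordinates), every colouring of
`Q_{n+t₁+1}` has a red `Q_n` or a blue `C_{t₁}` in each copy, hence a blue `C_{t₁,t₂}`.

Lower bound: on `Q_N` with `N ≤ n + t₁` colour blue only `∅` and the sets of size `> n`. A red
copy of `Q_n` would contain a chain of `n + 1` sets with all sizes in `[1, n]`. In a blue
`C_{t₁,t₂}` no element of the long chain is `∅` or the full set, as both are comparable to the
short chain, so its `t₁` elements have distinct sizes in `(n, N)`, which are too few.
-/

open Finset

/-- The arrow relation `Q → (P₁, P₂)`, so that `posetRamsey P₁ P₂` is the least `N` with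
`Q_N → (P₁, P₂)`. -/
def RamseyArrows (Q P₁ P₂ : Type*) [PartialOrder Q] [PartialOrder P₁] [PartialOrder P₂] :
    Prop :=
  ∀ c : Q → Bool, (∃ f : P₁ ↪o Q, ∀ x, c (f x) = true) ∨ (∃ f : P₂ ↪o Q, ∀ x, c (f x) = false)

namespace RamseyArrows

variable {Q Q' P₁ P₁' P₂ : Type*} [PartialOrder Q] [PartialOrder Q'] [PartialOrder P₁]
  [PartialOrder P₁'] [PartialOrder P₂]

theorem map (h : RamseyArrows Q P₁ P₂) (e : Q ↪o Q') : RamseyArrows Q' P₁ P₂ := by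
  intro c
  rcases h (c ∘ e) with ⟨f, hf⟩ | ⟨f, hf⟩
  · exact .inl ⟨f.trans e, hf⟩
  · exact .inr ⟨f.trans e, hf⟩

theorem comap_left (h : RamseyArrows Q P₁ P₂) (e : P₁' ↪o P₁) : RamseyArrows Q P₁' P₂ := by
  intro c
  rcases h c with ⟨f, hf⟩ | hred
  · exact .inl ⟨e.trans f, fun x => hf (e x)⟩
  · exact .inr hred

theorem sum (h : RamseyArrows Q P₁ P₂) (h' : RamseyArrows Q P₁' P₂) :
    RamseyArrows (Q ⊕ Q) (P₁ ⊕ P₁') P₂ := by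
  intro c
  rcases h (c ∘ Sum.inl) with ⟨f, hf⟩ | ⟨f, hf⟩
  · rcases h' (c ∘ Sum.inr) with ⟨f', hf'⟩ | ⟨f', hf'⟩
    · exact .inl ⟨RelEmbedding.sumLiftRelMap f f', by rintro (x | x); exacts [hf x, hf' x]⟩
    · exact .inr ⟨f'.trans (RelEmbedding.sumLiftRelInr _ _), hf'⟩
  · exact .inr ⟨f.trans (RelEmbedding.sumLiftRelInl _ _), hf⟩

end RamseyArrows

theorem posetRamsey_eq_of_ramseyArrows {P₁ P₂ : Type*} [PartialOrder P₁] [PartialOrder P₂]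
    {N : ℕ} (h : RamseyArrows (Finset (Fin N)) P₁ P₂)
    (hlt : ∀ M < N, ¬ RamseyArrows (Finset (Fin M)) P₁ P₂) : posetRamsey P₁ P₂ = N :=
  IsLeast.csInf_eq ⟨h, fun _ hM => not_lt.1 fun hlt' => hlt _ hlt' hM⟩

section StairChain

variable {P : Type*} [PartialOrder P] {m : ℕ} (c : P × Fin (m + 1) → Bool)

def HasStairChain (p : P) (k : ℕ) : Prop :=
  ∃ Z : ℕ → P × Fin (m + 1), ∀ i < k,
    c (Z i) = true ∧ (Z i).1 ≤ p ∧ (Z i).2.val ≤ i ∧ (i + 1 < k → Z i < Z (i + 1))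

variable {c}

theorem hasStairChain_zero (p : P) : HasStairChain c p 0 :=
  ⟨fun _ => (p, 0), by simp⟩

theorem HasStairChain.mono {p q : P} {k : ℕ} (h : HasStairChain c p k) (hpq : p ≤ q) :
    HasStairChain c q k := by
  obtain ⟨Z, hZ⟩ := h
  exact ⟨Z, fun i hi => by
    obtain ⟨hblue, hp, hi', hlt⟩ := hZ i hi
    exact ⟨hblue, hp.trans hpq, hi', hlt⟩⟩

theorem HasStairChain.snoc {p : P} {k : ℕ} (h : HasStairChain c p k) (hk : k ≤ m)
    (hblue : c (p, ⟨k, Nat.lt_succ_of_le hk⟩) = true) : HasStairChain c p (k + 1) := by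
  obtain ⟨Z, hZ⟩ := h
  refine ⟨fun i => if i < k then Z i else (p, ⟨k, Nat.lt_succ_of_le hk⟩), fun i hi => ?_⟩
  rcases Nat.lt_or_ge i k with hik | hik
  · obtain ⟨hblue', hp, hi', hlt⟩ := hZ i hik
    simp only [if_pos hik]
    refine ⟨hblue', hp, hi', fun _ => ?_⟩
    rcases Nat.lt_or_ge (i + 1) k with hik' | hik'
    · simpa only [if_pos hik'] using hlt hik'
    · rw [if_neg (by omega)]
      exact Prod.lt_iff.2 (.inr ⟨hp, Fin.lt_def.2 (show (Z i).2.val < k by omega)⟩)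
  · obtain rfl : i = k := by omega
    simp [hblue]

theorem not_hasStairChain_findGreatest_succ {p : P} [DecidablePred (HasStairChain c p)]
    (hp : ¬ HasStairChain c p (m + 1)) :
    ¬ HasStairChain c p (Nat.findGreatest (HasStairChain c p) m + 1) := by
  intro h
  rcases (Nat.findGreatest_le (P := HasStairChain c p) m).lt_or_eq with hlt | heq
  · exact Nat.findGreatest_is_greatest (Nat.lt_succ_self _) hlt h
  · rw [heq] at h
    exact hp h

theorem HasStairChain.exists_strictMono {p : P} (h : HasStairChain c p (m + 1)) :
    ∃ g : Fin (m + 1) → P × Fin (m + 1), StrictMono g ∧ ∀ i, c (g i) = true := by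
  obtain ⟨Z, hZ⟩ := h
  refine ⟨fun i => Z i, Fin.strictMono_iff_lt_succ.2 fun i => ?_, fun i => (hZ i i.2).1⟩
  exact (hZ i (by omega)).2.2.2 (by simp)

theorem ramseyArrows_prod_fin (P : Type*) [PartialOrder P] (m : ℕ) :
    RamseyArrows (P × Fin (m + 1)) (Fin (m + 1)) P := by
  classical
  intro c
  by_cases hchain : ∃ p, HasStairChain c p (m + 1)
  · obtain ⟨p, hp⟩ := hchain
    obtain ⟨g, hg, hblue⟩ := hp.exists_strictMono
    exact .inl ⟨OrderEmbedding.ofStrictMono g hg, hblue⟩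
  push Not at hchain
  let height (p : P) : ℕ := Nat.findGreatest (HasStairChain c p) m
  have height_le (p : P) : height p ≤ m := Nat.findGreatest_le m
  have height_mono : Monotone height := fun p q hpq =>
    Nat.findGreatest_mono_left (fun _ hk => hk.mono hpq) m
  have red (p : P) : c (p, ⟨height p, Nat.lt_succ_of_le (height_le p)⟩) = false :=
    Bool.eq_false_iff.2 fun hblue => not_hasStairChain_findGreatest_succ (hchain p)
      ((Nat.findGreatest_spec (Nat.zero_le m) (hasStairChain_zero p)).snoc (height_le p) hblue)
  refine .inr ⟨OrderEmbedding.ofMapLEIff (fun p => (p, ⟨height p, _⟩)) fun p q => ?_, red⟩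
  simpa [Prod.mk_le_mk, Fin.le_def] using fun h => height_mono h

end StairChain

def prefixEmbedding (m : ℕ) : Fin (m + 1) ↪o Finset (Fin m) :=
  OrderEmbedding.ofMapLEIff (fun i => univ.filter fun j => j.castSucc < i) fun i i' => by
    refine ⟨fun h => ?_, fun h j hj => ?_⟩
    · by_contra! hlt
      have hmem := h (mem_filter.2 ⟨mem_univ (⟨i', by omega⟩ : Fin m), hlt⟩)
      exact lt_irrefl i'.val (mem_filter.1 hmem).2
    · simp only [mem_filter, mem_univ, true_and] at hj ⊢
      exact hj.trans_le h

def prodFinEmbedding (α : Type*) (m : ℕ) : Finset α × Fin (m + 1) ↪o Finset (α ⊕ Fin m) :=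
  OrderEmbedding.ofMapLEIff (fun p => p.1.disjSum (prefixEmbedding m p.2)) fun p q => by
    rw [disjSum_subset, toLeft_disjSum, toRight_disjSum, Prod.le_def]
    exact and_congr Iff.rfl (prefixEmbedding m).le_iff_le

theorem ramseyArrows_finset_sum_fin (α : Type*) (m : ℕ) :
    RamseyArrows (Finset (α ⊕ Fin m)) (Fin (m + 1)) (Finset α) :=
  (ramseyArrows_prod_fin _ m).map (prodFinEmbedding α m)

def sumSelfEmbedding (β : Type*) : Finset β ⊕ Finset β ↪o Finset (Bool ⊕ β) :=
  OrderEmbedding.ofMapLEIff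
    (Sum.elim ({false} : Finset Bool).disjSum ({true} : Finset Bool).disjSum)
    (by rintro (s | s) (t | t) <;> simp [disjSum_subset])

theorem card_add_card_le_card_of_strictMono {α β : Type*} {f : Finset α → Finset β}
    (hf : StrictMono f) (s : Finset α) : #(f ∅) + #s ≤ #(f s) := by
  classical
  induction s using Finset.induction_on with
  | empty => simp
  | insert a s ha ih =>
    rw [card_insert_of_notMem ha]
    have := card_lt_card (hf (ssubset_insert ha))
    omega

theorem exists_eq_empty_or_card_lt {α β : Type*} [Fintype α] (f : Finset α ↪o Finset β) :
    ∃ s, f s = ∅ ∨ Fintype.card α < #(f s) := by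
  by_cases h : f ∅ = ∅
  · exact ⟨∅, .inl h⟩
  refine ⟨univ, .inr ?_⟩
  have := card_add_card_le_card_of_strictMono f.strictMono univ
  have := card_pos.2 (nonempty_iff_ne_empty.2 h)
  rw [card_univ] at *
  omega

theorem add_lt_card_of_sum_orderEmbedding {P β : Type*} [PartialOrder P] [Nonempty P]
    [Fintype β] {m n : ℕ} (g : Fin (m + 1) ⊕ P ↪o Finset β)
    (hg : ∀ x, g x = ∅ ∨ n < #(g x)) : n + (m + 1) < Fintype.card β := by
  obtain ⟨p⟩ := ‹Nonempty P›
  have hsize (i : Fin (m + 1)) : #(g (.inl i)) ∈ Ioo n (Fintype.card β) := by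
    have hnle : ¬ g (.inl i) ≤ g (.inr p) := by simp
    have hnge : ¬ g (.inr p) ≤ g (.inl i) := by simp
    refine mem_Ioo.2 ⟨(hg _).resolve_left fun h => hnle (h ▸ empty_subset _), ?_⟩
    exact (card_lt_iff_ne_univ _).2 fun h => hnge (h ▸ subset_univ _)
  have hmono : StrictMono fun i => #(g (.inl i)) := fun i j hij =>
    card_lt_card (g.lt_iff_lt.2 (Sum.inl_lt_inl_iff.2 hij))
  have := card_le_card_of_injOn (s := univ) _ (fun i _ => hsize i) hmono.injective.injOn
  simp only [card_univ, Fintype.card_fin, Nat.card_Ioo] at this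
  omega

theorem not_ramseyArrows_of_card_le {P α β : Type*} [PartialOrder P] [Nonempty P]
    [Fintype α] [Fintype β] {m : ℕ} (h : Fintype.card β ≤ Fintype.card α + (m + 1)) :
    ¬ RamseyArrows (Finset β) (Fin (m + 1) ⊕ P) (Finset α) := by
  classical
  intro harrows
  rcases harrows fun s => decide (s = ∅ ∨ Fintype.card α < #s) with ⟨g, hg⟩ | ⟨f, hf⟩
  · have := add_lt_card_of_sum_orderEmbedding g (by simpa using hg)
    omega
  · obtain ⟨s, hs⟩ := exists_eq_empty_or_card_lt f
    simpa [hs] using hf s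

theorem two_chain_composition_vs_cube_ramsey_general (n t₁ t₂ : ℕ)
    (ht₂ : 1 ≤ t₂) (ht : t₂ ≤ t₁) :
    posetRamsey (Fin t₁ ⊕ Fin t₂) (Finset (Fin n)) = n + t₁ + 1 := by
  obtain ⟨m, rfl⟩ : ∃ m, t₁ = m + 1 := ⟨t₁ - 1, by omega⟩
  have : Nonempty (Fin t₂) := ⟨⟨0, ht₂⟩⟩
  have hcard : Fintype.card (Bool ⊕ (Fin n ⊕ Fin m)) = n + (m + 1) + 1 := by
    simp only [Fintype.card_sum, Fintype.card_bool, Fintype.card_fin]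
    omega
  have hchain := ramseyArrows_finset_sum_fin (Fin n) m
  refine posetRamsey_eq_of_ramseyArrows ?_ fun M hM =>
    not_ramseyArrows_of_card_le (by simp only [Fintype.card_fin]; omega)
  exact ((hchain.sum (hchain.comap_left (Fin.castLEOrderEmb ht))).map (sumSelfEmbedding _)).map
    (mapEmbedding (Fintype.equivFinOfCardEq hcard).toEmbedding)

/-- `R(C_{t₁,t₂}, Q_n) = n + t₁ + 1`: the chain composition of two parallel chains
(on `Fin t₁ ⊕ Fin t₂` with the disjoint-sum order) versus the Boolean lattice. -/
theorem two_chain_composition_vs_cube_ramsey (n t₁ t₂ : ℕ) (hn : 1 ≤ n)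
    (ht₂ : 1 ≤ t₂) (ht : t₂ ≤ t₁) :
    posetRamsey (Fin t₁ ⊕ Fin t₂) (Finset (Fin n)) = n + t₁ + 1 :=
  two_chain_composition_vs_cube_ramsey_general n t₁ t₂ ht₂ ht
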